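/- For every ultrafilter U on ℕ, the upper cone C_fe(U) = {V : U ⊴_fe V} equals the topological closure of the set {U ⊕ V : V ∈ βℕ} in βℕ. -/
import Mathlib


/-- `A ≤_fe B`: every finite subset of `A` has a translate contained in `B`. -/
def fe (A B : Set ℕ) : Prop :=
  ∀ F : Finset ℕ, ↑F ⊆ A → ∃ n : ℕ, ∀ a ∈ F, n + a ∈ B

/-- The sum of ultrafilters on ℕ: `A ∈ usum U V ↔ {n | {m | n + m ∈ A} ∈ V} ∈ U`. -/
def usum (U V : Ultrafilter ℕ) : Ultrafilter ℕ :=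
  U.bind fun n => V.map fun m => n + m

/-- Finite embeddability of ultrafilters: `U ⊴_fe V` iff every `B ∈ V`
contains a finitely embedded `A ∈ U`. -/
def ufe (U V : Ultrafilter ℕ) : Prop := ∀ B ∈ V, ∃ A ∈ U, fe A B

lemma mem_usum {U V : Ultrafilter ℕ} {s : Set ℕ} :
    s ∈ usum U V ↔ {n | {m | n + m ∈ s} ∈ V} ∈ U := Iff.rfl

/-- The upper cone `C_fe(U)` is the closure of `{U ⊕ V | V ∈ βℕ}`. -/
theorem stmt10 (U : Ultrafilter ℕ) :
    {V : Ultrafilter ℕ | ufe U V} = closure (Set.range (usum U)) := by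
  classical
  ext V
  simp only [Set.mem_setOf_eq]
  rw [ultrafilterBasis_is_basis.mem_closure_iff]
  constructor
  · rintro h _ ⟨s, rfl⟩ hs
    obtain ⟨A, hA, hfe⟩ := h s hs
    set G : Set (Set ℕ) := {t | ∃ n ∈ A, t = {m | n + m ∈ s}} with hG
    have hne : (Filter.generate G).NeBot := by
      rw [Filter.generate_neBot_iff]
      intro t ht htfin
      have hch : ∀ u ∈ t, ∃ n, n ∈ A ∧ u = {m | n + m ∈ s} := by
        intro u hu
        obtain ⟨n, hn, h'⟩ := ht hu
        exact ⟨n, hn, h'⟩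
      choose! f hfA hfu using hch
      obtain ⟨n, hn⟩ := hfe (htfin.toFinset.image f) (by
        intro a ha
        simp only [Finset.coe_image, Set.mem_image, Set.Finite.coe_toFinset] at ha
        obtain ⟨u, hu, rfl⟩ := ha
        exact hfA u hu)
      refine ⟨n, ?_⟩
      intro u hu
      have hfu' := hfu u hu
      have : n + f u ∈ s := hn (f u) (by
        simp only [Finset.mem_image, Set.Finite.mem_toFinset]
        exact ⟨u, hu, rfl⟩)
      rw [hfu']
      simpa [Nat.add_comm] using this
    obtain ⟨W, hW⟩ := Ultrafilter.exists_le (Filter.generate G)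
    refine ⟨usum U W, ?_, ⟨W, rfl⟩⟩
    show s ∈ usum U W
    rw [mem_usum]
    apply Filter.mem_of_superset hA
    intro n hn
    exact hW (Filter.mem_generate_of_mem ⟨n, hn, rfl⟩)
  · intro h B hB
    obtain ⟨V', hV'mem, W, rfl⟩ := h {u | B ∈ u} ⟨B, rfl⟩ hB
    refine ⟨{n | {m | n + m ∈ B} ∈ W}, mem_usum.1 hV'mem, ?_⟩
    intro F hF
    have hmem : (⋂ n ∈ F, {m | n + m ∈ B}) ∈ W := by
      exact (Filter.biInter_finset_mem F).2 fun n hn => hF hn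
    obtain ⟨m, hm⟩ := W.nonempty_of_mem hmem
    refine ⟨m, fun a ha => ?_⟩
    have := Set.mem_iInter₂.1 hm a ha
    simpa [Nat.add_comm] using this
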